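/- arXiv:2102.03883 — 7 statements merged into one kernel-verified Lean document; each statement's English description precedes it below -/
import Mathlib

section
/- Let R be a commutative ring and let a = (a₁,a₂,a₃), b = (b₁,b₂,b₃), c = (c₁,c₂,c₃) be rows in R³ satisfying a₁b₁ + a₂b₂ + a₃b₃ = 1 and c₁b₁ + c₂b₂ + c₃b₃ = 1. Set d₁ = c₃a₂ − c₂a₃, d₂ = c₁a₃ − c₃a₁, d₃ = c₂a₁ − c₁a₂, and let ε be the 4×4 matrix over R with rows (1, d₁, d₂, d₃), (0,1,0,0), (0,0,1,0), (0,0,0,1). Then θ(c,b) = εᵀ · θ(a,b) · ε, where for rows x, y ∈ R³, θ(x,y) denotes the 4×4 matrix with rows (0, −y₁, −y₂, −y₃), (y₁, 0, −x₃, x₂), (y₂, x₃, 0, −x₁), (y₃, −x₂, x₁, 0). -/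
open Matrix

/-- For rows `x, y ∈ R³`, `theta x y` is the skew-symmetric 4×4 matrix with rows
`(0, −y₁, −y₂, −y₃), (y₁, 0, −x₃, x₂), (y₂, x₃, 0, −x₁), (y₃, −x₂, x₁, 0)`. -/
def theta {R : Type*} [CommRing R] (x y : Fin 3 → R) : Matrix (Fin 4) (Fin 4) R :=
  !![0,    -y 0, -y 1, -y 2;
     y 0,  0,    -x 2, x 1;
     y 1,  x 2,  0,    -x 0;
     y 2,  -x 1, x 0,  0]

/-- The elementary matrix `ε` with first row `(1, d₁, d₂, d₃)` where
`d₁ = c₃a₂ − c₂a₃`, `d₂ = c₁a₃ − c₃a₁`, `d₃ = c₂a₁ − c₁a₂`. -/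
def epsMatrix {R : Type*} [CommRing R] (a c : Fin 3 → R) : Matrix (Fin 4) (Fin 4) R :=
  !![1, c 2 * a 1 - c 1 * a 2, c 0 * a 2 - c 2 * a 0, c 1 * a 0 - c 0 * a 1;
     0, 1, 0, 0;
     0, 0, 1, 0;
     0, 0, 0, 1]

/-! Write `ε = 1 + e₀ d'ᵀ` with `d' = (0, a × c)`. Since the first column of `θ = θ(a,b)`
is `b' = (0, b)`, its first row is `-b'ᵀ` and `θ₀₀ = 0`, conjugating gives
`εᵀ θ ε = θ + b' d'ᵀ - d' b'ᵀ`. The correction only changes the lower 3×3 block, which is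
the cross-product matrix of the first argument, and there it adds the cross-product matrix
of `(a × c) × b = (a·b) c - (c·b) a = c - a`. -/

theorem Matrix.transpose_one_add_vecMulVec_mul_mul {R n : Type*} [CommRing R] [Fintype n]
    [DecidableEq n] (M : Matrix n n R) (e u : n → R) :
    (1 + vecMulVec e u)ᵀ * M * (1 + vecMulVec e u) =
      M + vecMulVec (M *ᵥ e) u + vecMulVec u (e ᵥ* M) +
        (e ⬝ᵥ M *ᵥ e) • vecMulVec u u := by
  simp only [transpose_add, transpose_one, transpose_vecMulVec, add_mul, mul_add, one_mul,
    mul_one, mul_vecMulVec, vecMulVec_mul, vecMulVec_mulVec, op_smul_eq_smul, smul_vecMulVec,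
    dotProduct_mulVec]
  abel

section

variable {R : Type*} [CommRing R]

theorem theta_mulVec_single_zero (x y : Fin 3 → R) :
    theta x y *ᵥ Pi.single 0 1 = vecCons 0 y := by
  ext i
  fin_cases i <;> simp [theta]

theorem single_zero_vecMul_theta (x y : Fin 3 → R) :
    Pi.single 0 1 ᵥ* theta x y = -vecCons 0 y := by
  ext i
  fin_cases i <;> simp [theta]

theorem theta_add_cross_cross (x y d : Fin 3 → R) :
    theta (x + d ⨯₃ y) y =
      theta x y + vecMulVec (vecCons 0 y) (vecCons 0 d) -
        vecMulVec (vecCons 0 d) (vecCons 0 y) := by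
  ext i j
  simp only [Matrix.sub_apply, Matrix.add_apply, vecMulVec_apply]
  fin_cases i <;> fin_cases j <;> simp [theta, cross_apply] <;> ring

theorem epsMatrix_eq_one_add_vecMulVec (a c : Fin 3 → R) :
    epsMatrix a c = 1 + vecMulVec (Pi.single 0 1) (vecCons 0 (a ⨯₃ c)) := by
  ext i j
  simp only [Matrix.add_apply, vecMulVec_apply]
  fin_cases i <;> fin_cases j <;> simp [epsMatrix, cross_apply, one_apply] <;> ring

theorem cross_cross_eq_sub_of_dotProduct_eq_one {a b c : Fin 3 → R} (hab : a ⬝ᵥ b = 1)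
    (hcb : c ⬝ᵥ b = 1) : a ⨯₃ c ⨯₃ b = c - a := by
  rw [cross_cross_eq_smul_sub_smul, hab, hcb, one_smul, one_smul]

end

/-- If `a·b = 1` and `c·b = 1` then `θ(c,b) = εᵀ · θ(a,b) · ε`. -/
theorem theta_eq_transpose_mul_theta_mul
    {R : Type*} [CommRing R] (a b c : Fin 3 → R)
    (hab : a 0 * b 0 + a 1 * b 1 + a 2 * b 2 = 1)
    (hcb : c 0 * b 0 + c 1 * b 1 + c 2 * b 2 = 1) :
    theta c b = (epsMatrix a c)ᵀ * theta a b * epsMatrix a c := by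
  have hc : c = a + a ⨯₃ c ⨯₃ b := by
    rw [cross_cross_eq_sub_of_dotProduct_eq_one (by rwa [vec3_dotProduct])
      (by rwa [vec3_dotProduct]), add_sub_cancel]
  rw [epsMatrix_eq_one_add_vecMulVec, transpose_one_add_vecMulVec_mul_mul,
    theta_mulVec_single_zero, single_zero_vecMul_theta, single_one_dotProduct, cons_val_zero,
    zero_smul, add_zero, vecMulVec_neg, ← sub_eq_add_neg]
  conv_lhs => rw [hc, theta_add_cross_cross]
end

section
/- Let A be a commutative ring, B ⊆ A a subring, and h ∈ B such that the inclusion B ↪ A is an analytic isomorphism along h. Let I be an ideal of A, regarded as a B-module by restriction of scalars. Then the induced inclusion B ⊕ I ↪ A ⊕ I of excision rings is an analytic isomorphism along the element (h,0); that is: (h,0) is a non-zero-divisor of B ⊕ I, (h,0) is a non-zero-divisor of A ⊕ I, and the induced ring homomorphism (B ⊕ I)/(h,0)(B ⊕ I) → (A ⊕ I)/(h,0)(A ⊕ I) is bijective. -/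
/-- A ring homomorphism `f : B → A` is an analytic isomorphism along `h ∈ B` if `h` is a
non-zero-divisor of `B`, `f h` is a non-zero-divisor of `A`, and the induced map
`B/hB → A/(f h)A` is bijective. -/
def IsAnalyticIsoAlong {B A : Type*} [CommRing B] [CommRing A] (f : B →+* A) (h : B) : Prop :=
  h ∈ nonZeroDivisors B ∧ f h ∈ nonZeroDivisors A ∧
    Function.Bijective (Ideal.quotientMap (Ideal.span {f h}) f
      ((Ideal.span_singleton_le_iff_mem _).mpr (Ideal.mem_comap.mpr (Ideal.subset_span rfl))))

/-!
In an excision ring `R ⊕ M`, multiplication by `(r, 0)` is `(a, m) ↦ (r a, r m)`, so `(r, 0)` is a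
non-zero-divisor as soon as `r` is regular on both `R` and `M`, and the principal ideal it generates
is `rR ⊕ rM`. Modulo `(h, 0)` the map `B ⊕ I → A ⊕ I` is therefore the given isomorphism
`B/hB → A/hA` on the first factor and the identity of `I/hI` on the second.
-/

open scoped nonZeroDivisors

namespace Ideal

variable {R S : Type*} [Ring R] [Ring S] {I : Ideal S} {J : Ideal R} [I.IsTwoSided] [J.IsTwoSided]
  {f : R →+* S} {H : J ≤ I.comap f}

theorem quotientMap_injective_iff : Function.Injective (quotientMap I f H) ↔ I.comap f ≤ J := by
  refine ⟨fun hinj a ha => ?_, quotientMap_injective'⟩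
  rw [← Quotient.eq_zero_iff_mem]
  apply hinj
  rwa [quotientMap_mk, map_zero, Quotient.eq_zero_iff_mem]

theorem quotientMap_surjective_iff :
    Function.Surjective (quotientMap I f H) ↔ ∀ s, ∃ r, f r - s ∈ I := by
  refine ⟨fun hsurj s => ?_, fun h => ?_⟩
  · obtain ⟨q, hq⟩ := hsurj (Quotient.mk I s)
    obtain ⟨r, rfl⟩ := Quotient.mk_surjective q
    exact ⟨r, Quotient.eq.mp hq⟩
  · intro q
    obtain ⟨s, rfl⟩ := Quotient.mk_surjective q
    obtain ⟨r, hr⟩ := h s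
    exact ⟨Quotient.mk J r, Quotient.eq.mpr hr⟩

end Ideal

namespace Unitization

section

variable {R M : Type*} [CommRing R] [NonUnitalCommRing M] [Module R M] [IsScalarTower R M M]
  [SMulCommClass R M M]

theorem inl_mul_eq_smul (r : R) (x : Unitization R M) : inl r * x = r • x := by
  rw [← algebraMap_eq_inl, Algebra.smul_def]

theorem inl_mem_nonZeroDivisors {r : R} (hR : r ∈ R⁰) (hM : IsSMulRegular M r) :
    (inl r : Unitization R M) ∈ (Unitization R M)⁰ := by
  refine mem_nonZeroDivisors_iff_right.mpr fun x hx => ?_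
  rw [mul_comm, inl_mul_eq_smul] at hx
  ext
  · exact (mem_nonZeroDivisors_iff_left.mp hR) _ (by simpa using congr(($hx).fst))
  · exact hM.right_eq_zero_of_smul (by simpa using congr(($hx).snd))

theorem mem_span_inl_iff {r : R} {x : Unitization R M} :
    x ∈ Ideal.span {inl r} ↔ r ∣ x.fst ∧ ∃ m : M, r • m = x.snd := by
  simp only [Ideal.mem_span_singleton, inl_mul_eq_smul, Dvd.dvd]
  constructor
  · rintro ⟨c, rfl⟩
    exact ⟨⟨c.fst, by simp⟩, c.snd, by simp⟩
  · rintro ⟨⟨a, ha⟩, m, hm⟩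
    exact ⟨inl a + inr m, by ext <;> simp [ha, hm]⟩

end

variable {R S M : Type*} [CommRing R] [CommRing S] [Algebra R S] [NonUnitalCommRing M]
  [Module R M] [IsScalarTower R M M] [SMulCommClass R M M]
  [Module S M] [IsScalarTower S M M] [SMulCommClass S M M] [IsScalarTower R S M]

theorem isAnalyticIsoAlong_inl {r : R} (hr : IsAnalyticIsoAlong (algebraMap R S) r)
    (hM : IsSMulRegular M (algebraMap R S r)) (g : Unitization R M →+* Unitization S M)
    (hg : ∀ x, (g x).fst = algebraMap R S x.fst ∧ (g x).snd = x.snd) :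
    IsAnalyticIsoAlong g (inl r) := by
  obtain ⟨hR, hS, hinj, hsurj⟩ := hr
  have hgr : g (inl r) = inl (algebraMap R S r) := by ext <;> simp [hg]
  refine ⟨inl_mem_nonZeroDivisors hR ((isSMulRegular_algebraMap_iff S).mp hM),
    hgr ▸ inl_mem_nonZeroDivisors hS hM, ?_, ?_⟩
  · rw [Ideal.quotientMap_injective_iff] at hinj ⊢
    intro x hx
    rw [Ideal.mem_comap, hgr, mem_span_inl_iff, (hg x).1, (hg x).2] at hx
    obtain ⟨hfst, m, hm⟩ := hx
    refine mem_span_inl_iff.mpr ⟨?_, m, by rw [← hm, algebraMap_smul]⟩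
    exact Ideal.mem_span_singleton.mp (hinj (Ideal.mem_span_singleton.mpr hfst))
  · rw [Ideal.quotientMap_surjective_iff] at hsurj ⊢
    intro x
    obtain ⟨b, hb⟩ := hsurj x.fst
    refine ⟨inl b + inr x.snd, ?_⟩
    have hw : g (inl b + inr x.snd) - x = inl (algebraMap R S b - x.fst) := by
      obtain ⟨hfst, hsnd⟩ := hg (inl b + inr x.snd)
      ext <;> simp [sub_eq_add_neg, hfst, hsnd, -map_add]
    rw [hgr, hw, mem_span_inl_iff]
    exact ⟨by rw [fst_inl]; exact Ideal.mem_span_singleton.mp hb, 0, by rw [snd_inl, smul_zero]⟩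

end Unitization

/-- If `B ⊆ A` is a subring, `h ∈ B`, and `B ↪ A` is an analytic isomorphism along `h`, then
for any ideal `I` of `A` the induced inclusion of excision rings `B ⊕ I ↪ A ⊕ I`
(the ring map `g` with `g(b,i) = (b,i)`) is an analytic isomorphism along `(h,0)`. -/
theorem excision_analyticIso {A : Type*} [CommRing A] (B : Subring A) (h : ↥B)
    (I : Ideal A)
    (hBA : IsAnalyticIsoAlong B.subtype h)
    (g : Unitization ↥B ↥I →+* Unitization A ↥I)
    (hg : ∀ x : Unitization ↥B ↥I, (g x).fst = (x.fst : A) ∧ (g x).snd = x.snd) :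
    IsAnalyticIsoAlong g (Unitization.inl h) := by
  have hI : IsSMulRegular I (h : A) := .of_injective I.subtype Subtype.val_injective
    (isRegular_iff_mem_nonZeroDivisors.mpr hBA.2.1).left.isSMulRegular
  exact Unitization.isAnalyticIsoAlong_inl hBA hI g hg
end

section
/- Let k be a field, d ≥ 1, let f be a nonzero polynomial in k[X₁, X₂, …, X_d], and let φ(X₁) ∈ k[X₁] be a monic polynomial of degree ≥ 1. Then there exist positive integers r₂, …, r_d such that, under the k-algebra endomorphism of k[X₁, …, X_d] determined by X₁ ↦ X₁ and Xᵢ ↦ Xᵢ + φ(X₁)^{rᵢ} for 2 ≤ i ≤ d, the image g of f satisfies g = c · h, where c ∈ k is a nonzero scalar and h, viewed as a polynomial in X₁ with coefficients in k[X₂, …, X_d] via the isomorphism k[X₁, …, X_d] ≅ (k[X₂, …, X_d])[X₁], is monic in X₁. -/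
/-!
Write `m = deg φ` and `Φ` for the image of `φ(X₀)` in `k[X₁, …, Xₙ][X₀]`. After the substitution
each variable becomes a monic polynomial in `X₀` (namely `X₀`, resp. `Xᵢ + Φ ^ rᵢ` of degree
`m rᵢ`), so a monomial `c X^d` of `f` becomes `c` times a monic polynomial of degree
`d₀ + m ∑ dᵢ rᵢ`. Taking `rᵢ = Nⁱ` with `N > m · totalDegree f`, this degree is the base-`N`
number with digits `d₀, m d₁, …, m dₙ`, so distinct monomials of `f` acquire distinct degrees.
The monomial of largest degree then alone contributes the leading coefficient, a nonzero
scalar `c`.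
-/

open scoped Polynomial

namespace Polynomial

theorem leadingCoeff_sum_of_degree_lt {R ι : Type*} [Semiring R] {s : Finset ι} {f : ι → R[X]}
    {i : ι} (hi : i ∈ s) (h : ∀ j ∈ s, j ≠ i → (f j).degree < (f i).degree) :
    (∑ j ∈ s, f j).leadingCoeff = (f i).leadingCoeff := by
  classical
  rw [← Finset.add_sum_erase s f hi]
  rcases (s.erase i).eq_empty_or_nonempty with hs | hs
  · rw [hs, Finset.sum_empty, add_zero]
  refine leadingCoeff_add_of_degree_lt' ((degree_sum_le _ _).trans_lt ?_)
  rw [← Finset.sup'_eq_sup hs, Finset.sup'_lt_iff]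
  exact fun j hj => h j (Finset.mem_of_mem_erase hj) (Finset.ne_of_mem_erase hj)

theorem monic_C_add_pow {R : Type*} [Semiring R] {p : R[X]} (hp : p.Monic)
    (hdeg : 0 < p.natDegree) (a : R) {e : ℕ} (he : 0 < e) :
    (C a + p ^ e).Monic ∧ (C a + p ^ e).natDegree = e * p.natDegree := by
  have hlt : (C a).degree < (p ^ e).degree := by
    refine degree_C_le.trans_lt ?_
    rw [← natDegree_pos_iff_degree_pos, hp.natDegree_pow]
    exact Nat.mul_pos he hdeg
  refine ⟨(hp.pow e).add_of_right hlt, ?_⟩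
  rw [natDegree_add_eq_right_of_degree_lt hlt, hp.natDegree_pow]

end Polynomial

theorem Nat.sum_mul_pow_injOn (N n : ℕ) :
    Set.InjOn (fun v : Fin n → ℕ => ∑ i, v i * N ^ (i : ℕ)) {v | ∀ i, v i < N} := by
  induction n with
  | zero => exact fun v _ w _ _ => Subsingleton.elim v w
  | succ n ih =>
    intro v hv w hw h
    simp only [Fin.sum_univ_succ, Fin.val_zero, pow_zero, mul_one, Fin.val_succ, pow_succ,
      ← mul_assoc, ← Finset.sum_mul] at h
    have h0 : v 0 = w 0 := by
      simpa [Nat.add_mul_mod_self_right, Nat.mod_eq_of_lt (hv 0), Nat.mod_eq_of_lt (hw 0)]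
        using congrArg (· % N) h
    have htail : Fin.tail v = Fin.tail w := by
      refine ih (fun i => hv _) (fun i => hw _) ?_
      refine Nat.eq_of_mul_eq_mul_right (Nat.zero_lt_of_lt (hv 0)) ?_
      rwa [h0, Nat.add_left_cancel_iff] at h
    exact Fin.cons_self_tail v ▸ Fin.cons_self_tail w ▸ h0 ▸ htail ▸ rfl

namespace MvPolynomial

variable {R A σ : Type*} [CommSemiring R] [CommSemiring A] [Algebra R A] {g : σ → A[X]}

theorem monic_finsuppProd_pow (hg : ∀ i, (g i).Monic) (d : σ →₀ ℕ) :
    (d.prod fun i k => g i ^ k).Monic :=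
  Polynomial.monic_prod_of_monic _ _ fun i _ => (hg i).pow _

theorem natDegree_finsuppProd_pow [Nontrivial A] (hg : ∀ i, (g i).Monic) (d : σ →₀ ℕ) :
    (d.prod fun i k => g i ^ k).natDegree = Finsupp.weight (fun i => (g i).natDegree) d := by
  rw [Finsupp.prod, Polynomial.natDegree_prod_of_monic _ _ fun i _ => (hg i).pow _,
    Finsupp.weight_apply, Finsupp.sum]
  exact Finset.sum_congr rfl fun i _ => (hg i).natDegree_pow _

theorem degree_aeval_monomial [Nontrivial A] [FaithfulSMul R A] (hg : ∀ i, (g i).Monic)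
    (d : σ →₀ ℕ) {a : R} (ha : a ≠ 0) :
    (aeval g (monomial d a)).degree = Finsupp.weight (fun i => (g i).natDegree) d := by
  have hmonic := monic_finsuppProd_pow hg d
  rw [aeval_monomial, hmonic.degree_mul, Polynomial.algebraMap_apply,
    Polynomial.degree_C ((map_ne_zero_iff _ (FaithfulSMul.algebraMap_injective R A)).2 ha),
    zero_add, Polynomial.degree_eq_natDegree hmonic.ne_zero, natDegree_finsuppProd_pow hg]

theorem leadingCoeff_aeval_monomial (hg : ∀ i, (g i).Monic) (d : σ →₀ ℕ) (a : R) :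
    (aeval g (monomial d a)).leadingCoeff = algebraMap R A a := by
  rw [aeval_monomial, Polynomial.leadingCoeff_mul_monic (monic_finsuppProd_pow hg d),
    Polynomial.algebraMap_apply, Polynomial.leadingCoeff_C]

theorem exists_leadingCoeff_aeval_eq [Nontrivial A] [FaithfulSMul R A] (hg : ∀ i, (g i).Monic)
    {f : MvPolynomial σ R} (hf : f ≠ 0)
    (hinj : Set.InjOn (Finsupp.weight fun i => (g i).natDegree) (f.support : Set (σ →₀ ℕ))) :
    ∃ d ∈ f.support, (aeval g f).leadingCoeff = algebraMap R A (f.coeff d) := by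
  obtain ⟨d, hd, hmax⟩ :=
    f.support.exists_max_image (Finsupp.weight fun i => (g i).natDegree) (support_nonempty.2 hf)
  refine ⟨d, hd, ?_⟩
  conv_lhs => rw [← f.support_sum_monomial_coeff, map_sum]
  rw [Polynomial.leadingCoeff_sum_of_degree_lt hd, leadingCoeff_aeval_monomial hg]
  intro e he hne
  rw [degree_aeval_monomial hg e (mem_support_iff.1 he),
    degree_aeval_monomial hg d (mem_support_iff.1 hd), Nat.cast_lt]
  exact (hmax e he).lt_of_ne fun h => hne (hinj he hd h)

theorem finSuccEquiv_aeval_X_zero {n : ℕ} (p : R[X]) :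
    finSuccEquiv R n (Polynomial.aeval (X 0) p) =
      p.map (algebraMap R (MvPolynomial (Fin n) R)) := by
  rw [← Polynomial.aeval_algHom_apply, finSuccEquiv_X_zero, Polynomial.aeval_X_left_eq_map]

theorem weight_mul_pow_injOn_support {n m : ℕ} (f : MvPolynomial (Fin n) R) {c : Fin n → ℕ}
    (hc : ∀ i, c i ≠ 0) (hcm : ∀ i, c i ≤ m) :
    Set.InjOn (Finsupp.weight fun i => c i * (m * f.totalDegree + 1) ^ (i : ℕ))
      (f.support : Set (Fin n →₀ ℕ)) := by
  intro d hd e he h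
  have hlt : ∀ d ∈ f.support, ∀ i, c i * d i < m * f.totalDegree + 1 := fun d hd i =>
    Nat.lt_succ_of_le <| Nat.mul_le_mul (hcm i) <|
      (monomial_le_degreeOf i hd).trans (degreeOf_le_totalDegree f i)
  have := Nat.sum_mul_pow_injOn _ n (hlt d hd) (hlt e he) <| by
    simpa only [Finsupp.weight_eq_sum, smul_eq_mul, mul_assoc, mul_left_comm] using h
  ext i
  exact Nat.eq_of_mul_eq_mul_left (Nat.pos_of_ne_zero (hc i)) (congrFun this i)

end MvPolynomial

section NagataSubst

open MvPolynomial

variable {R : Type*} [CommRing R] {n : ℕ} (φ : R[X]) (r : Fin (n + 1) → ℕ)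

noncomputable def nagataSubst : Fin (n + 1) → MvPolynomial (Fin (n + 1)) R := fun i =>
  if i = 0 then X 0 else X i + Polynomial.aeval (X 0 : MvPolynomial (Fin (n + 1)) R) φ ^ r i

theorem finSuccEquiv_nagataSubst_zero : finSuccEquiv R n (nagataSubst φ r 0) = Polynomial.X := by
  rw [nagataSubst, if_pos rfl, finSuccEquiv_X_zero]

theorem finSuccEquiv_nagataSubst_succ (j : Fin n) :
    finSuccEquiv R n (nagataSubst φ r j.succ) =
      Polynomial.C (X j) + φ.map (algebraMap R (MvPolynomial (Fin n) R)) ^ r j.succ := by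
  rw [nagataSubst, if_neg j.succ_ne_zero, map_add, map_pow, finSuccEquiv_X_succ,
    finSuccEquiv_aeval_X_zero]

variable {φ r}

theorem monic_finSuccEquiv_nagataSubst [Nontrivial R] (hφ : φ.Monic) (hdeg : 0 < φ.natDegree)
    (hr : ∀ j : Fin n, 0 < r j.succ) (i : Fin (n + 1)) :
    (finSuccEquiv R n (nagataSubst φ r i)).Monic := by
  cases i using Fin.cases with
  | zero => exact finSuccEquiv_nagataSubst_zero φ r ▸ Polynomial.monic_X
  | succ j =>
    rw [finSuccEquiv_nagataSubst_succ]
    exact (Polynomial.monic_C_add_pow (hφ.map _) (by rwa [hφ.natDegree_map]) _ (hr j)).1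

theorem natDegree_finSuccEquiv_nagataSubst [Nontrivial R] (hφ : φ.Monic)
    (hdeg : 0 < φ.natDegree) (hr : ∀ j : Fin n, 0 < r j.succ) (i : Fin (n + 1)) :
    (finSuccEquiv R n (nagataSubst φ r i)).natDegree =
      if i = 0 then 1 else φ.natDegree * r i := by
  cases i using Fin.cases with
  | zero => rw [finSuccEquiv_nagataSubst_zero, Polynomial.natDegree_X, if_pos rfl]
  | succ j =>
    rw [finSuccEquiv_nagataSubst_succ, if_neg j.succ_ne_zero,
      (Polynomial.monic_C_add_pow (hφ.map _) (by rwa [hφ.natDegree_map]) _ (hr j)).2,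
      hφ.natDegree_map, mul_comm]

end NagataSubst

/-- **Nagata's lemma.**  Let `k` be a field, `d = n + 1 ≥ 1`, `f ≠ 0` a polynomial in
`k[X₀, …, X_n]`, and `φ ∈ k[T]` monic of degree ≥ 1.  Then there are positive integers `rᵢ`
such that after the change of variables `X₀ ↦ X₀`, `Xᵢ ↦ Xᵢ + φ(X₀)^{rᵢ}` (`i ≠ 0`), the
image of `f` equals `c · h` with `c ∈ k` nonzero and `h` monic as a polynomial in `X₀` with
coefficients in `k[X₁, …, X_n]`. -/
theorem nagata_monic_change_of_variables {k : Type*} [Field k] (n : ℕ)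
    (f : MvPolynomial (Fin (n + 1)) k) (hf : f ≠ 0)
    (φ : Polynomial k) (hφ : φ.Monic) (hdeg : 1 ≤ φ.natDegree) :
    ∃ r : Fin (n + 1) → ℕ, (∀ i, 0 < r i) ∧
      ∃ (c : k) (h : Polynomial (MvPolynomial (Fin n) k)), c ≠ 0 ∧ h.Monic ∧
        MvPolynomial.finSuccEquiv k n
          ((MvPolynomial.aeval (fun i : Fin (n + 1) =>
              if i = 0 then MvPolynomial.X 0
              else MvPolynomial.X i +
                (Polynomial.aeval (MvPolynomial.X 0 : MvPolynomial (Fin (n + 1)) k) φ) ^ r i)) f)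
          = Polynomial.C (MvPolynomial.C c) * h := by
  set N := φ.natDegree * f.totalDegree + 1
  set r : Fin (n + 1) → ℕ := fun i => N ^ (i : ℕ)
  have hr : ∀ i, 0 < r i := fun i => pow_pos (Nat.succ_pos _) _
  set g := fun i => MvPolynomial.finSuccEquiv k n (nagataSubst φ r i)
  have hweight : (fun i => (g i).natDegree) =
      fun i : Fin (n + 1) => (if i = 0 then 1 else φ.natDegree) * N ^ (i : ℕ) := by
    ext i
    rw [natDegree_finSuccEquiv_nagataSubst hφ hdeg fun j => hr _]
    split_ifs with hi <;> simp [hi, r]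
  have hinj : Set.InjOn (Finsupp.weight fun i => (g i).natDegree)
      (f.support : Set (Fin (n + 1) →₀ ℕ)) :=
    hweight ▸ MvPolynomial.weight_mul_pow_injOn_support f
      (fun i => by split_ifs <;> omega) (fun i => by split_ifs <;> omega)
  obtain ⟨d, hd, hlc⟩ := MvPolynomial.exists_leadingCoeff_aeval_eq
    (monic_finSuccEquiv_nagataSubst hφ hdeg fun j => hr _) hf hinj
  set c := f.coeff d
  have hc : c ≠ 0 := MvPolynomial.mem_support_iff.1 hd
  refine ⟨r, hr, c, Polynomial.C (MvPolynomial.C c⁻¹) * MvPolynomial.aeval g f, hc, ?_, ?_⟩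
  · refine Polynomial.monic_C_mul_of_mul_leadingCoeff_eq_one ?_
    rw [hlc, MvPolynomial.algebraMap_eq, ← map_mul, inv_mul_cancel₀ hc, map_one]
  · rw [← mul_assoc, ← map_mul, ← map_mul, mul_inv_cancel₀ hc, map_one, map_one, one_mul]
    exact MvPolynomial.comp_aeval_apply _ (MvPolynomial.finSuccEquiv k n).toAlgHom f
end

section
/- Let R be a commutative ring, I an ideal of R, S ⊆ R a subring, and h ∈ S such that the inclusion S ↪ R is an analytic isomorphism along h. Then the inclusion S[It] ↪ R[It] is an analytic isomorphism along h; that is: the constant polynomial h is a non-zero-divisor of S[It], it is a non-zero-divisor of the Rees algebra R[It], and the induced ring homomorphism S[It]/(h·S[It]) → R[It]/(h·R[It]) is bijective. -/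
open Polynomial
open scoped nonZeroDivisors

section QuotientMap

variable {B A : Type*} [CommRing B] [CommRing A] (f : B →+* A) (h : B)

theorem quotientMap_span_singleton_injective_iff
    {H : Ideal.span {h} ≤ (Ideal.span {f h}).comap f} :
    Function.Injective (Ideal.quotientMap _ f H) ↔ ∀ b, f h ∣ f b → h ∣ b := by
  simp only [← Ideal.mem_span_singleton]
  refine ⟨fun hinj b hb => ?_, fun hcomap => Ideal.quotientMap_injective' hcomap⟩
  rw [← Ideal.Quotient.eq_zero_iff_mem]
  refine hinj ?_
  rwa [map_zero, Ideal.quotientMap_mk, Ideal.Quotient.eq_zero_iff_mem]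

theorem quotientMap_span_singleton_surjective_iff
    {H : Ideal.span {h} ≤ (Ideal.span {f h}).comap f} :
    Function.Surjective (Ideal.quotientMap _ f H) ↔ ∀ a, ∃ b, f h ∣ a - f b := by
  simp only [← Ideal.mem_span_singleton, ← Ideal.Quotient.mk_eq_mk_iff_sub_mem]
  rw [Function.Surjective, Ideal.Quotient.mk_surjective.forall]
  simp only [Ideal.Quotient.mk_surjective.exists, Ideal.quotientMap_mk, eq_comm]

theorem isAnalyticIsoAlong_iff :
    IsAnalyticIsoAlong f h ↔ h ∈ B⁰ ∧ f h ∈ A⁰ ∧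
      (∀ b, f h ∣ f b → h ∣ b) ∧ ∀ a, ∃ b, f h ∣ a - f b := by
  rw [IsAnalyticIsoAlong, Function.Bijective, quotientMap_span_singleton_injective_iff,
    quotientMap_span_singleton_surjective_iff]

variable {f h}

theorem IsAnalyticIsoAlong.exists_eq_map_of_map_eq_mul (hf : IsAnalyticIsoAlong f h) {b : B}
    {a : A} (hb : f b = f h * a) : ∃ c, a = f c := by
  obtain ⟨c, rfl⟩ := ((isAnalyticIsoAlong_iff f h).1 hf).2.2.1 b ⟨a, hb⟩
  refine ⟨c, ?_⟩
  rwa [map_mul, mul_cancel_left_mem_nonZeroDivisors hf.2.1, eq_comm] at hb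

end QuotientMap

theorem Polynomial.C_mem_nonZeroDivisors {R : Type*} [CommRing R] {r : R} (hr : r ∈ R⁰) :
    C r ∈ R[X]⁰ :=
  mem_nonZeroDivisors_of_leadingCoeff (by rwa [leadingCoeff_C])

section ReesAlgebra

variable {R : Type*} [CommRing R] {I : Ideal R} {S : Subring R} {T : Subring R[X]} {h : S}

theorem reesAlgebra.mem_of_C_mul_mem (hSR : IsAnalyticIsoAlong S.subtype h)
    (hT : ∀ p : R[X], p ∈ T ↔ p.coeff 0 ∈ S ∧ ∀ n : ℕ, 0 < n → p.coeff n ∈ I ^ n)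
    {a : R[X]} (ha : a ∈ reesAlgebra I) (hha : C (h : R) * a ∈ T) : a ∈ T := by
  rw [hT, coeff_C_mul] at hha
  refine (hT a).2 ⟨?_, fun n _ => (mem_reesAlgebra_iff I a).1 ha n⟩
  obtain ⟨c, hc⟩ := hSR.exists_eq_map_of_map_eq_mul (b := ⟨_, hha.1⟩) rfl
  exact hc ▸ c.2

theorem reesAlgebra.exists_mem_eq_add_C_mul (hSR : IsAnalyticIsoAlong S.subtype h)
    (hT : ∀ p : R[X], p ∈ T ↔ p.coeff 0 ∈ S ∧ ∀ n : ℕ, 0 < n → p.coeff n ∈ I ^ n)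
    {a : R[X]} (ha : a ∈ reesAlgebra I) : ∃ p ∈ T, ∃ r : R, a = p + C (h : R) * C r := by
  obtain ⟨s, r, hr⟩ := ((isAnalyticIsoAlong_iff _ _).1 hSR).2.2.2 (a.coeff 0)
  refine ⟨a - C (h * r : R), (hT _).2 ⟨?_, fun n hn => ?_⟩, r, by rw [C_mul]; ring⟩
  · rw [coeff_sub, coeff_C_zero, ← Subring.coe_subtype, ← hr, sub_sub_cancel]
    exact s.2
  · simpa [coeff_C, hn.ne'] using (mem_reesAlgebra_iff I a).1 ha n

end ReesAlgebra

/-- Let `S ⊆ R` be a subring, `h ∈ S`, and suppose `S ↪ R` is an analytic isomorphism along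
`h`.  Let `T = S[It]` be the subring of `R[t]` of polynomials with constant coefficient in `S`
and `n`-th coefficient in `Iⁿ` for `n ≥ 1`.  Then the inclusion `S[It] ↪ R[It]` into the Rees
algebra of `I` is an analytic isomorphism along the constant polynomial `h`. -/
theorem reesAlgebra_analyticIso {R : Type*} [CommRing R] (I : Ideal R)
    (S : Subring R) (h : ↥S)
    (hSR : IsAnalyticIsoAlong S.subtype h)
    (T : Subring (Polynomial R))
    (hT : ∀ p : Polynomial R, p ∈ T ↔ p.coeff 0 ∈ S ∧ ∀ n : ℕ, 0 < n → p.coeff n ∈ I ^ n)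
    (hle : T ≤ (reesAlgebra I).toSubring)
    (hmem : Polynomial.C (h : R) ∈ T) :
    IsAnalyticIsoAlong (Subring.inclusion hle) ⟨Polynomial.C (h : R), hmem⟩ := by
  have hCh : C (h : R) ∈ R[X]⁰ := C_mem_nonZeroDivisors hSR.2.1
  refine (isAnalyticIsoAlong_iff _ _).2
    ⟨mem_nonZeroDivisors_of_injective (f := T.subtype) Subtype.val_injective hCh,
      mem_nonZeroDivisors_of_injective (f := (reesAlgebra I).toSubring.subtype)
        Subtype.val_injective hCh, ?_, ?_⟩
  · rintro x ⟨a, hxa⟩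
    have hx : (x : R[X]) = C (h : R) * a := congrArg Subtype.val hxa
    exact ⟨⟨a, reesAlgebra.mem_of_C_mul_mem hSR hT a.2 (hx ▸ x.2)⟩, Subtype.ext hx⟩
  · intro a
    obtain ⟨p, hp, r, hpr⟩ := reesAlgebra.exists_mem_eq_add_C_mul hSR hT a.2
    refine ⟨⟨p, hp⟩, ⟨C r, (reesAlgebra I).algebraMap_mem r⟩, Subtype.ext ?_⟩
    simp [hpr]
end

section
/- Let R be a commutative ring, I an ideal of R, and n ≥ 2. Let φ : R ⊕ I → R be the ring homomorphism from the excision ring defined by φ((r,i)) = r + i, and let 0 ⊕ I denote the ideal {(0,i) : i ∈ I} of R ⊕ I. Then for every ε ∈ E_n(R, I) there exists ε̃ ∈ E_n(R ⊕ I, 0 ⊕ I) such that the entrywise image of ε̃ under φ equals ε. -/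
/-- `ElemGroup n A` is the elementary group `Eₙ(A)`: the set of all products of elementary
matrices `e_{ij}(a) = 1 + a·E_{ij}` (`i ≠ j`).  Since the inverse of an elementary matrix is
elementary, this submonoid is the subgroup of `GLₙ(A)` generated by elementary matrices. -/
def ElemGroup (n : ℕ) (A : Type*) [CommRing A] : Submonoid (Matrix (Fin n) (Fin n) A) :=
  Submonoid.closure {M | ∃ (i j : Fin n) (a : A), i ≠ j ∧ M = 1 + Matrix.single i j a}

/-- `RelElemGroup n A J` is the relative elementary group `Eₙ(A, J)`: the set of all products
of conjugates `α e_{ij}(a) α⁻¹` with `α ∈ Eₙ(A)`, `i ≠ j` and `a ∈ J`.  Since the inverse of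
such a generator is again such a generator, this submonoid is the subgroup generated by the
conjugates `α e_{ij}(a) α⁻¹`. -/
noncomputable def RelElemGroup (n : ℕ) (A : Type*) [CommRing A] (J : Ideal A) :
    Submonoid (Matrix (Fin n) (Fin n) A) :=
  Submonoid.closure {M | ∃ α ∈ ElemGroup n A, ∃ (i j : Fin n) (a : A), i ≠ j ∧ a ∈ J ∧
    M = α * (1 + Matrix.single i j a) * α⁻¹}

/-!
The map `φ : R ⊕ I → R` is surjective and carries `0 ⊕ I` onto `I`.  Along any surjective ring
map `f : A → B` with `K ⊆ f(J)`, each generator `α e_{ij}(b) α⁻¹` of `Eₙ(B, K)` lifts to a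
generator `α̃ e_{ij}(a) α̃⁻¹` of `Eₙ(A, J)`: lift `α` factor by factor and `b` into `J`; since
elementary matrices have determinant `1`, `f` commutes with inverting `α̃`.
-/

section

open Matrix

variable {n : ℕ} {A B : Type*} [CommRing A] [CommRing B]

lemma RingHom.mapMatrix_nonsing_inv (f : A →+* B) {M : Matrix (Fin n) (Fin n) A}
    (hM : IsUnit M.det) : f.mapMatrix M⁻¹ = (f.mapMatrix M)⁻¹ :=
  (inv_eq_right_inv (by rw [← map_mul, mul_nonsing_inv _ hM, map_one])).symm

lemma RingHom.mapMatrix_one_add_single (f : A →+* B) (i j : Fin n) (a : A) :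
    f.mapMatrix (1 + single i j a) = 1 + single i j (f a) := by
  rw [map_add, map_one, RingHom.mapMatrix_apply, map_single]

lemma ElemGroup.det_eq_one {M : Matrix (Fin n) (Fin n) A} (hM : M ∈ ElemGroup n A) :
    M.det = 1 := by
  induction hM using Submonoid.closure_induction with
  | mem M hM =>
    obtain ⟨i, j, a, hij, rfl⟩ := hM
    exact det_transvection_of_ne i j hij a
  | one => exact det_one
  | mul M N _ _ hM hN => rw [det_mul, hM, hN, one_mul]

lemma ElemGroup.le_map_of_surjective {f : A →+* B} (hf : Function.Surjective f) :
    ElemGroup n B ≤ (ElemGroup n A).map f.mapMatrix := by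
  refine Submonoid.closure_le.mpr ?_
  rintro _ ⟨i, j, b, hij, rfl⟩
  obtain ⟨a, rfl⟩ := hf b
  exact ⟨1 + single i j a, Submonoid.subset_closure ⟨i, j, a, hij, rfl⟩,
    f.mapMatrix_one_add_single i j a⟩

lemma RelElemGroup.le_map_of_surjective {f : A →+* B} (hf : Function.Surjective f)
    {J : Ideal A} {K : Ideal B} (hK : K ≤ J.map f) :
    RelElemGroup n B K ≤ (RelElemGroup n A J).map f.mapMatrix := by
  refine Submonoid.closure_le.mpr ?_
  rintro _ ⟨_, hfα, i, j, b, hij, hb, rfl⟩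
  obtain ⟨α, hα, rfl⟩ := ElemGroup.le_map_of_surjective hf hfα
  obtain ⟨a, ha, rfl⟩ := (Ideal.mem_map_iff_of_surjective f hf).mp (hK hb)
  refine ⟨α * (1 + single i j a) * α⁻¹,
    Submonoid.subset_closure ⟨α, hα, i, j, a, hij, ha, rfl⟩, ?_⟩
  rw [map_mul, map_mul, f.mapMatrix_one_add_single,
    f.mapMatrix_nonsing_inv (ElemGroup.det_eq_one hα ▸ isUnit_one)]

end

theorem relElem_lifts_to_excision_general {R : Type*} [CommRing R] (I : Ideal R)
    (n : ℕ)
    (φ : Unitization R ↥I →+* R) (hφ : ∀ x : Unitization R ↥I, φ x = x.fst + ↑x.snd)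
    (Z : Ideal (Unitization R ↥I)) (hZ : ∀ x : Unitization R ↥I, x ∈ Z ↔ x.fst = 0)
    (ε : Matrix (Fin n) (Fin n) R) (hε : ε ∈ RelElemGroup n R I) :
    ∃ εt ∈ RelElemGroup n (Unitization R ↥I) Z, εt.map φ = ε := by
  have hφ_surj : Function.Surjective φ := fun r => ⟨Unitization.inl r, by simp [hφ]⟩
  have hI_le : I ≤ Z.map φ := fun a ha =>
    (Ideal.mem_map_iff_of_surjective φ hφ_surj).mpr
      ⟨Unitization.inr ⟨a, ha⟩, by simp [hZ], by simp [hφ]⟩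
  obtain ⟨εt, hεt, rfl⟩ := RelElemGroup.le_map_of_surjective hφ_surj hI_le hε
  exact ⟨εt, hεt, rfl⟩

/-- Let `I` be an ideal of `R` and let `φ : R ⊕ I → R`, `φ(r,i) = r + i` be the natural map
from the excision ring (Mathlib's `Unitization R I`), and let `Z = 0 ⊕ I` be the ideal
`{(0,i) : i ∈ I}` of `R ⊕ I`.  Every `ε ∈ Eₙ(R, I)` lifts to some `ε̃ ∈ Eₙ(R ⊕ I, 0 ⊕ I)`
with entrywise image `ε` under `φ`. -/
theorem relElem_lifts_to_excision {R : Type*} [CommRing R] (I : Ideal R)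
    (n : ℕ) (hn : 2 ≤ n)
    (φ : Unitization R ↥I →+* R) (hφ : ∀ x : Unitization R ↥I, φ x = x.fst + ↑x.snd)
    (Z : Ideal (Unitization R ↥I)) (hZ : ∀ x : Unitization R ↥I, x ∈ Z ↔ x.fst = 0)
    (ε : Matrix (Fin n) (Fin n) R) (hε : ε ∈ RelElemGroup n R I) :
    ∃ εt ∈ RelElemGroup n (Unitization R ↥I) Z, εt.map φ = ε :=
  relElem_lifts_to_excision_general I n φ hφ Z hZ ε hε
end

section
/- Let B and D be commutative rings such that D is a retract of B, i.e. there is a surjective ring homomorphism π : B → D and a ring homomorphism γ : D → B with π ∘ γ = id_D. Let J = ker(π) and let n ≥ 3. Then E_n(B, J) = E_n(B) ∩ SL_n(B, J). -/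
/-!
The endomorphism `f = γ ∘ π` of `B` factors through `π` and satisfies `a ≡ f a (mod J)`.
Applied entrywise it maps `Eₙ(B)` into itself, and `M · f(M)⁻¹ ∈ Eₙ(B, J)` for every
`M ∈ Eₙ(B)`: on a generator this is `e_{ij}(a) e_{ij}(f a)⁻¹ = e_{ij}(a - f a)`, and for a
product `xy` it is `x f(x)⁻¹ · f(x) (y f(y)⁻¹) f(x)⁻¹`. If moreover `M ≡ 1 (mod J)`, then
`f(M) = 1`, so `M ∈ Eₙ(B, J)`.
-/

open Matrix

namespace Matrix

variable {ι : Type*} [DecidableEq ι] {A : Type*} [CommRing A]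

theorem inv_transvection [Fintype ι] {i j : ι} (hij : i ≠ j) (a : A) :
    (transvection i j a)⁻¹ = transvection i j (-a) :=
  inv_eq_right_inv <| by
    rw [transvection_mul_transvection_same i j hij, add_neg_cancel, transvection_zero]

theorem map_transvection {A' : Type*} [CommRing A'] (f : A →+* A') (i j : ι) (a : A) :
    (transvection i j a).map f = transvection i j (f a) := by
  simp [transvection, Matrix.map_add f (map_add f)]

theorem map_eq_one_iff_forall_sub_one_mem_ker {A' : Type*} [CommRing A'] (f : A →+* A')
    (M : Matrix ι ι A) :
    M.map f = 1 ↔ ∀ i j, M i j - (1 : Matrix ι ι A) i j ∈ RingHom.ker f := by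
  simp [← Matrix.ext_iff, sub_eq_zero, Matrix.one_apply, apply_ite f]

end Matrix

namespace ElemGroup

variable {n : ℕ} {A : Type*} [CommRing A] {M : Matrix (Fin n) (Fin n) A}

theorem transvection_mem {i j : Fin n} (hij : i ≠ j) (a : A) :
    transvection i j a ∈ ElemGroup n A :=
  Submonoid.subset_closure ⟨i, j, a, hij, rfl⟩

theorem det_of_mem (hM : M ∈ ElemGroup n A) : M.det = 1 := by
  induction hM using Submonoid.closure_induction with
  | mem _ h =>
    obtain ⟨i, j, a, hij, rfl⟩ := h
    exact det_transvection_of_ne i j hij a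
  | one => exact det_one
  | mul _ _ _ _ hx hy => rw [det_mul, hx, hy, one_mul]

theorem isUnit_det_of_mem (hM : M ∈ ElemGroup n A) : IsUnit M.det :=
  (det_of_mem hM).symm ▸ isUnit_one

theorem inv_mem (hM : M ∈ ElemGroup n A) : M⁻¹ ∈ ElemGroup n A := by
  induction hM using Submonoid.closure_induction with
  | mem _ h =>
    obtain ⟨i, j, a, hij, rfl⟩ := h
    exact inv_transvection hij a ▸ transvection_mem hij (-a)
  | one => rw [inv_one]; exact one_mem _
  | mul _ _ _ _ hx hy => rw [Matrix.mul_inv_rev]; exact mul_mem hy hx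

theorem map_mem {A' : Type*} [CommRing A'] (f : A →+* A') (hM : M ∈ ElemGroup n A) :
    M.map f ∈ ElemGroup n A' := by
  induction hM using Submonoid.closure_induction with
  | mem _ h =>
    obtain ⟨i, j, a, hij, rfl⟩ := h
    exact map_transvection f i j a ▸ transvection_mem hij (f a)
  | one => rw [Matrix.map_one f f.map_zero f.map_one]; exact one_mem _
  | mul _ _ _ _ hx hy => rw [Matrix.map_mul]; exact mul_mem hx hy

end ElemGroup

namespace RelElemGroup

open ElemGroup

variable {n : ℕ} {A : Type*} [CommRing A] {J : Ideal A} {M : Matrix (Fin n) (Fin n) A}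

theorem le_elemGroup : RelElemGroup n A J ≤ ElemGroup n A := by
  refine Submonoid.closure_le.2 ?_
  rintro _ ⟨α, hα, i, j, a, hij, -, rfl⟩
  exact mul_mem (mul_mem hα (transvection_mem hij a)) (inv_mem hα)

theorem conj_mem {α : Matrix (Fin n) (Fin n) A} (hα : α ∈ ElemGroup n A)
    (hM : M ∈ RelElemGroup n A J) : α * M * α⁻¹ ∈ RelElemGroup n A J := by
  induction hM using Submonoid.closure_induction with
  | mem _ h =>
    obtain ⟨β, hβ, i, j, a, hij, ha, rfl⟩ := h
    refine Submonoid.subset_closure ⟨α * β, mul_mem hα hβ, i, j, a, hij, ha, ?_⟩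
    simp only [Matrix.mul_inv_rev, mul_assoc]
  | one =>
    rw [mul_one, mul_nonsing_inv _ (isUnit_det_of_mem hα)]
    exact one_mem _
  | mul x y _ _ hx hy =>
    have : α * (x * y) * α⁻¹ = α * x * α⁻¹ * (α * y * α⁻¹) := by
      simp only [mul_assoc, nonsing_inv_mul_cancel_left _ _ (isUnit_det_of_mem hα)]
    exact this ▸ mul_mem hx hy

theorem map_eq_one_of_mem_ker {A' : Type*} [CommRing A'] {f : A →+* A'}
    (hM : M ∈ RelElemGroup n A (RingHom.ker f)) : M.map f = 1 := by
  induction hM using Submonoid.closure_induction with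
  | mem _ h =>
    obtain ⟨α, hα, i, j, a, -, ha, rfl⟩ := h
    change (α * transvection i j a * α⁻¹).map f = 1
    rw [Matrix.map_mul, Matrix.map_mul, map_transvection, RingHom.mem_ker.1 ha, transvection_zero,
      mul_one, ← Matrix.map_mul, mul_nonsing_inv _ (isUnit_det_of_mem hα),
      Matrix.map_one f f.map_zero f.map_one]
  | one => exact Matrix.map_one f f.map_zero f.map_one
  | mul _ _ _ _ hx hy => rw [Matrix.map_mul, hx, hy, mul_one]

theorem mul_inv_map_mem {f : A →+* A} (hf : ∀ a, a - f a ∈ J) (hM : M ∈ ElemGroup n A) :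
    M * (M.map f)⁻¹ ∈ RelElemGroup n A J := by
  induction hM using Submonoid.closure_induction with
  | mem _ h =>
    obtain ⟨i, j, a, hij, rfl⟩ := h
    refine Submonoid.subset_closure ⟨1, one_mem _, i, j, a - f a, hij, hf a, ?_⟩
    change transvection i j a * ((transvection i j a).map f)⁻¹ = 1 * transvection i j _ * 1⁻¹
    rw [map_transvection, inv_transvection hij, transvection_mul_transvection_same i j hij,
      ← sub_eq_add_neg, inv_one, one_mul, mul_one]
  | one =>
    rw [Matrix.map_one f f.map_zero f.map_one, inv_one, mul_one]
    exact one_mem _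
  | mul x y hx _ hx' hy' =>
    have hfx := map_mem f hx
    have : x * y * ((x * y).map f)⁻¹ =
        x * (x.map f)⁻¹ * (x.map f * (y * (y.map f)⁻¹) * (x.map f)⁻¹) := by
      simp only [Matrix.map_mul, Matrix.mul_inv_rev, mul_assoc,
        nonsing_inv_mul_cancel_left _ _ (isUnit_det_of_mem hfx)]
    exact this ▸ mul_mem hx' (conj_mem hfx hy')

end RelElemGroup

theorem relElem_eq_elem_inter_SL_of_retract_general {B D : Type*} [CommRing B] [CommRing D]
    (π : B →+* D) (γ : D →+* B)
    (hretract : π.comp γ = RingHom.id D)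
    (n : ℕ) :
    ∀ M : Matrix (Fin n) (Fin n) B,
      M ∈ RelElemGroup n B (RingHom.ker π) ↔
        (M ∈ ElemGroup n B ∧ M.det = 1 ∧
          ∀ i j, M i j - (1 : Matrix (Fin n) (Fin n) B) i j ∈ RingHom.ker π) := by
  intro M
  rw [← map_eq_one_iff_forall_sub_one_mem_ker]
  constructor
  · intro hM
    have hME := RelElemGroup.le_elemGroup hM
    exact ⟨hME, ElemGroup.det_of_mem hME, RelElemGroup.map_eq_one_of_mem_ker hM⟩
  · rintro ⟨hME, -, hMπ⟩
    have hγπ : ∀ a, a - γ.comp π a ∈ RingHom.ker π := fun a => by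
      rw [RingHom.mem_ker, map_sub, RingHom.comp_apply, ← RingHom.comp_apply π γ, hretract,
        RingHom.id_apply, sub_self]
    have hMγπ : M.map (γ.comp π) = 1 := by
      rw [RingHom.coe_comp, ← Matrix.map_map, hMπ, Matrix.map_one γ γ.map_zero γ.map_one]
    simpa only [hMγπ, inv_one, mul_one] using RelElemGroup.mul_inv_map_mem hγπ hME

/-- Let `D` be a retract of `B`, witnessed by a surjection `π : B → D` and a section
`γ : D → B` with `π ∘ γ = id`, and let `J = ker π`.  Then for `n ≥ 3`,
`Eₙ(B, J) = Eₙ(B) ∩ SLₙ(B, J)`. -/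
theorem relElem_eq_elem_inter_SL_of_retract {B D : Type*} [CommRing B] [CommRing D]
    (π : B →+* D) (γ : D →+* B) (hπ : Function.Surjective π)
    (hretract : π.comp γ = RingHom.id D)
    (n : ℕ) (hn : 3 ≤ n) :
    ∀ M : Matrix (Fin n) (Fin n) B,
      M ∈ RelElemGroup n B (RingHom.ker π) ↔
        (M ∈ ElemGroup n B ∧ M.det = 1 ∧
          ∀ i j, M i j - (1 : Matrix (Fin n) (Fin n) B) i j ∈ RingHom.ker π) :=
  relElem_eq_elem_inter_SL_of_retract_general π γ hretract n
end

section
/- Let (R, 𝔪) be a commutative local ring and let f ∈ R[X] be a Weierstrass polynomial, i.e. f = Xⁿ + a₁X^{n−1} + ⋯ + aₙ with all aᵢ ∈ 𝔪. Let P = (𝔪, X) be the maximal ideal of R[X] generated by 𝔪 and X. Then the localization map R[X] → R[X]_P is an analytic isomorphism along f: f is a non-zero-divisor of R[X], its image is a non-zero-divisor of R[X]_P, and the induced ring homomorphism R[X]/(f) → R[X]_P/(f) is bijective. -/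
open Polynomial Ideal

namespace IsLocalization

variable {B A : Type*} [CommRing B] [CommRing A] [Algebra B A] (S : Submonoid B)
  [IsLocalization S A]

theorem bijective_quotientMap_of_isUnit {I : Ideal B} {J : Ideal A}
    (hJ : J = I.map (algebraMap B A)) (H : I ≤ J.comap (algebraMap B A))
    (hS : ∀ s ∈ S, IsUnit (Ideal.Quotient.mk I s)) :
    Function.Bijective (quotientMap J (algebraMap B A) H) := by
  subst hJ
  have hunits : Algebra.algebraMapSubmonoid (B ⧸ I) S ≤ IsUnit.submonoid (B ⧸ I) := by
    rintro _ ⟨s, hs, rfl⟩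
    exact hS s hs
  exact (atUnits (B ⧸ I) _ hunits (S := A ⧸ I.map (algebraMap B A))).bijective

theorem isAnalyticIsoAlong_algebraMap {h : B} (hh : h ∈ nonZeroDivisors B)
    (hS : ∀ s ∈ S, IsUnit (Ideal.Quotient.mk (span {h}) s)) :
    IsAnalyticIsoAlong (algebraMap B A) h :=
  ⟨hh, nonZeroDivisors_le_comap S A hh,
    bijective_quotientMap_of_isUnit S (by rw [map_span, Set.image_singleton]) _ hS⟩

end IsLocalization

namespace Polynomial

variable {R : Type*} [CommRing R]

theorem Monic.isMaximal_comap_C {f : R[X]} (hf : f.Monic) {M : Ideal R[X]} [M.IsMaximal]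
    (hfM : f ∈ M) : (M.comap C).IsMaximal := by
  have : Module.Finite R (R[X] ⧸ span {f}) := hf.finite_quotient
  have hM : (M.map (Ideal.Quotient.mk (span {f}))).IsMaximal :=
    IsMaximal.map_of_surjective_of_ker_le Quotient.mk_surjective
      (by rwa [mk_ker, span_singleton_le_iff_mem])
  have := isMaximal_comap_of_isIntegral_of_isMaximal (R := R) _ (hI := hM)
  rwa [IsScalarTower.algebraMap_eq R R[X], ← comap_comap, Quotient.algebraMap_eq, algebraMap_eq,
    comap_map_of_surjective' _ Quotient.mk_surjective, mk_ker,
    sup_eq_left.mpr ((span_singleton_le_iff_mem M).mpr hfM)] at this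

theorem IsDistinguishedAt.X_mem {f : R[X]} {I : Ideal R} (hf : f.IsDistinguishedAt I)
    {M : Ideal R[X]} [hM : M.IsPrime] (hIM : I ≤ M.comap C) (hfM : f ∈ M) : X ∈ M := by
  have hsub : X ^ f.natDegree - f ∈ I.map C := by
    rw [← mk_ker (I := I), ← ker_mapRingHom, RingHom.mem_ker, map_sub, coe_mapRingHom,
      hf.map_eq_X_pow, Polynomial.map_pow, map_X, sub_self]
  have hXn : X ^ f.natDegree ∈ M := by
    simpa using add_mem (map_le_iff_le_comap.mpr hIM hsub) hfM
  exact hM.mem_of_pow_mem _ hXn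

theorem mem_span_C_image_union_X_of_coeff_zero_mem {I : Ideal R} {g : R[X]}
    (hg : g.coeff 0 ∈ I) : g ∈ span (C '' (I : Set R) ∪ {X}) := by
  obtain ⟨q, hq⟩ := X_dvd_sub_C (p := g)
  rw [← sub_add_cancel g (C (g.coeff 0)), hq]
  exact add_mem (mul_mem_right _ _ (subset_span (Or.inr rfl)))
    (subset_span (Or.inl ⟨_, hg, rfl⟩))

theorem IsDistinguishedAt.isUnit_mk [IsLocalRing R] {f : R[X]}
    (hf : f.IsDistinguishedAt (IsLocalRing.maximalIdeal R)) {g : R[X]}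
    (hg : g ∉ span (C '' (IsLocalRing.maximalIdeal R : Set R) ∪ {X})) :
    IsUnit (Ideal.Quotient.mk (span {f}) g) := by
  by_contra hu
  obtain ⟨M', hM', hgM'⟩ := exists_le_maximal _ (span_singleton_eq_top.not.mpr hu)
  set M := M'.comap (Ideal.Quotient.mk (span {f}))
  have : M.IsMaximal := comap_isMaximal_of_surjective _ Quotient.mk_surjective
  have hfM : f ∈ M := by simp [M, Quotient.eq_zero_iff_mem.mpr (mem_span_singleton_self f)]
  have hgM : g ∈ M := hgM' (mem_span_singleton_self _)
  have hC : M.comap C = IsLocalRing.maximalIdeal R :=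
    IsLocalRing.eq_maximalIdeal (hf.monic.isMaximal_comap_C hfM)
  have hX : X ∈ M := hf.X_mem hC.ge hfM
  have hg0 : g.coeff 0 ∈ M.comap C := by
    obtain ⟨q, hq⟩ := X_dvd_sub_C (p := g)
    rw [mem_comap, ← sub_sub_cancel g (C _), hq]
    exact sub_mem hgM (mul_mem_right _ _ hX)
  exact hg (mem_span_C_image_union_X_of_coeff_zero_mem (hC ▸ hg0))

end Polynomial

/-- Let `(R, 𝔪)` be a local ring, `f ∈ R[X]` a Weierstrass polynomial (monic with all
lower-order coefficients in `𝔪`), and `P = (𝔪, X)` the maximal ideal of `R[X]` generated by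
`𝔪` and `X`.  Then the localization map `R[X] → R[X]_P` is an analytic isomorphism
along `f`. -/
theorem weierstrass_analyticIso {R : Type*} [CommRing R] [IsLocalRing R]
    (f : Polynomial R) (hf : f.Monic)
    (hcoeff : ∀ i < f.natDegree, f.coeff i ∈ IsLocalRing.maximalIdeal R)
    (P : Ideal (Polynomial R)) [hP : P.IsPrime]
    (hPdef : P = Ideal.span
      (Polynomial.C '' ((IsLocalRing.maximalIdeal R : Ideal R) : Set R) ∪ {Polynomial.X})) :
    IsAnalyticIsoAlong (algebraMap (Polynomial R) (Localization.AtPrime P)) f := by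
  have hdist : f.IsDistinguishedAt (IsLocalRing.maximalIdeal R) := ⟨⟨hcoeff _⟩, hf⟩
  exact IsLocalization.isAnalyticIsoAlong_algebraMap P.primeCompl hf.mem_nonZeroDivisors
    fun g hg => hdist.isUnit_mk (hPdef ▸ hg)
end
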